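/- Let {(x_k,z_k)} and {(y_k,c_k)} be generated by DSG under (H0)–(H2), (A0), (A1) with strong duality M_P = M_D = q̄ (the optimal dual value). If the sequence {z_k} converges weakly to 0 in H, then: the dual values q_k := q(y_k,c_k) converge to q̄; the primal sequence {x_k} is bounded in X; and every weak accumulation point of {x_k} is a primal solution (a minimizer of φ over X). -/

import Mathlib

open Filter Topology Bornology

noncomputable section

/-- A real normed space is *reflexive* if the canonical embedding into its double dual is
surjective. -/
def IsReflexiveSpace (X : Type*) [NormedAddCommGroup X] [NormedSpace ℝ X] : Prop :=
  Function.Surjective ⇑(NormedSpace.inclusionInDoubleDual ℝ X)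

/-- A set is *weakly compact* if it is compact in the weak topology. -/
def WCompact {X : Type*} [NormedAddCommGroup X] [NormedSpace ℝ X] (S : Set X) : Prop :=
  IsCompact (show Set (WeakSpace ℝ X) from S)

/-- A set is *weakly open* if it is open in the weak topology. -/
def WOpen {X : Type*} [NormedAddCommGroup X] [NormedSpace ℝ X] (S : Set X) : Prop :=
  IsOpen (show Set (WeakSpace ℝ X) from S)

/-- A set of pairs is *weakly compact* if it is compact in the product of the weak
topologies. -/
def WCompact2 {X H : Type*} [NormedAddCommGroup X] [NormedSpace ℝ X]
    [NormedAddCommGroup H] [NormedSpace ℝ H] (S : Set (X × H)) : Prop :=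
  IsCompact (show Set (WeakSpace ℝ X × WeakSpace ℝ H) from S)

/-- *Weak lower semicontinuity* of an extended-real-valued function. -/
def WLsc {X : Type*} [NormedAddCommGroup X] [NormedSpace ℝ X] (g : X → EReal) : Prop :=
  LowerSemicontinuous (show WeakSpace ℝ X → EReal from g)

/-- Weak lower semicontinuity of a function of two variables, w.r.t. the product of the
weak topologies. -/
def WLsc2 {X H : Type*} [NormedAddCommGroup X] [NormedSpace ℝ X]
    [NormedAddCommGroup H] [NormedSpace ℝ H] (g : X × H → EReal) : Prop :=
  LowerSemicontinuous (show WeakSpace ℝ X × WeakSpace ℝ H → EReal from g)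

/-- Weak upper semicontinuity of a real-valued function. -/
def WUsc {X : Type*} [NormedAddCommGroup X] [NormedSpace ℝ X] (g : X → ℝ) : Prop :=
  UpperSemicontinuous (show WeakSpace ℝ X → ℝ from g)

/-- Weak (sequential) convergence of a sequence: `L (u n) → L l` for every continuous
linear functional `L`. -/
def WSeqConv {X : Type*} [NormedAddCommGroup X] [NormedSpace ℝ X] (u : ℕ → X) (l : X) : Prop :=
  ∀ L : StrongDual ℝ X, Tendsto (fun n => L (u n)) atTop (𝓝 (L l))

/-- Weak level-compactness of a dualizing parameterization `f`. -/
def WLevelCompact {X H : Type*} [NormedAddCommGroup X] [NormedSpace ℝ X]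
    [NormedAddCommGroup H] [NormedSpace ℝ H] (f : X → H → EReal) : Prop :=
  ∀ (z₀ : H) (α : ℝ), ∃ U : Set H, WOpen U ∧ z₀ ∈ U ∧
    ∃ B : Set X, WCompact B ∧ ∀ z ∈ U, {x : X | f x z ≤ (α : EReal)} ⊆ B

section Lagrangian

variable {X H : Type*} [NormedAddCommGroup H] [InnerProductSpace ℝ H]

/-- The augmented Lagrangian integrand `(x,z) ↦ f(x,z) − ⟨A z, y⟩ + c σ(z)`. -/
def lagr (f : X → H → EReal) (σ : H → EReal) (A : H → H) (y : H) (c : ℝ) (x : X) (z : H) :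
    EReal :=
  f x z - ((inner ℝ (A z) y : ℝ) : EReal) + (c : EReal) * σ z

/-- The dual function `q(y,c) = inf_{x,z} (f(x,z) − ⟨A z, y⟩ + c σ(z))`. -/
def dualq (f : X → H → EReal) (σ : H → EReal) (A : H → H) (y : H) (c : ℝ) : EReal :=
  ⨅ (x : X) (z : H), lagr f σ A y c x z

/-- The dual optimal value `M_D = sup_{(y,c) ∈ H × ℝ₊} q(y,c)`. -/
def MD (f : X → H → EReal) (σ : H → EReal) (A : H → H) : EReal :=
  ⨆ (y : H) (c : ℝ) (_ : 0 ≤ c), dualq f σ A y c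

/-- `(y,c)` is a solution of the dual problem. -/
def DualSol (f : X → H → EReal) (σ : H → EReal) (A : H → H) (y : H) (c : ℝ) : Prop :=
  0 ≤ c ∧ ∀ (y' : H) (c' : ℝ), 0 ≤ c' → dualq f σ A y' c' ≤ dualq f σ A y c

/-- The function `γ_n(z) = β(z) − ⟨A z, ȳ⟩ + n σ(z)`, where `β(z) = inf_x f(x,z)`. -/
def gam (f : X → H → EReal) (σ : H → EReal) (A : H → H) (ybar : H) (n : ℕ) (z : H) : EReal :=
  (⨅ x : X, f x z) - ((inner ℝ (A z) ybar : ℝ) : EReal) + (n : EReal) * σ z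

end Lagrangian

/-- The primal optimal value `M_P = inf_x φ(x)`. -/
def MP {X : Type*} (φ : X → EReal) : EReal := ⨅ x, φ x

/-!
A DSG step can only increase the augmented Lagrangian pointwise, so the dual values `q_k`
increase and `f(x_k, z_k) ≤ q_k + r_k + ⟨A z_k, y_0⟩`. As `r_k → 0`, `z_k ⇀ 0` and
`z ↦ ⟨A z, y_0⟩` is weakly upper semicontinuous, `f(x_k, z_k)` is eventually below any level
above `sup_k q_k ≤ M_P`. Weak level-compactness of `f` near `z = 0` then traps `x_k` eventually
in a weakly compact, hence bounded, set, and weak lower semicontinuity of `f` bounds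
`φ(x̄) = f(x̄, 0)` by that level at every weak cluster point `x̄`. With the level `sup_k q_k` this
forces `M_P ≤ sup_k q_k`, i.e. `q_k → q̄`; with the level `M_P` it makes `x̄` a minimizer.
-/

section WeakTopology

variable {E : Type*} [NormedAddCommGroup E] [NormedSpace ℝ E]

theorem WSeqConv.tendsto_weakSpace {u : ℕ → E} {l : E} (h : WSeqConv u l) :
    Tendsto (fun n => show WeakSpace ℝ E from u n) atTop (𝓝 (show WeakSpace ℝ E from l)) :=
  (WeakBilin.tendsto_iff_forall_eval_tendsto _ (separatingDual_iff_injective.1 inferInstance)).2 h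

theorem WCompact.isBounded {B : Set E} (hB : WCompact B) : IsBounded B := by
  have hpointwise : ∀ L : StrongDual ℝ E, ∃ C, ∀ b : B,
      ‖NormedSpace.inclusionInDoubleDual ℝ E b L‖ ≤ C := fun L => by
    obtain ⟨C, hC⟩ := (hB.image (WeakBilin.eval_continuous _ L).norm).bddAbove
    exact ⟨C, fun b => hC ⟨_, b.2, rfl⟩⟩
  obtain ⟨C, hC⟩ := banach_steinhaus hpointwise
  refine isBounded_iff_forall_norm_le.2 ⟨C, fun v hv => ?_⟩
  rw [← (NormedSpace.inclusionInDoubleDualLi (E := E) ℝ).norm_map v]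
  exact hC ⟨v, hv⟩

end WeakTopology

section ClusterPoints

variable {α β ι : Type*} [TopologicalSpace α] [TopologicalSpace β] {l : Filter ι}

theorem MapClusterPt.prodMk_of_tendsto {u : ι → α} {v : ι → β} {a : α} {b : β}
    (hu : MapClusterPt a l u) (hv : Tendsto v l (𝓝 b)) :
    MapClusterPt (a, b) l fun i => (u i, v i) := by
  refine mapClusterPt_iff_frequently.2 fun s hs => ?_
  obtain ⟨U, hU, V, hV, hUV⟩ := mem_nhds_prod_iff.1 hs
  exact ((hu.frequently hU).and_eventually (hv hV)).mono fun _ h => hUV ⟨h.1, h.2⟩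

theorem LowerSemicontinuous.le_of_mapClusterPt {g : α → EReal} (hg : LowerSemicontinuous g)
    {u : ι → α} {p : α} (hp : MapClusterPt p l u) {S : EReal}
    (hS : ∀ t : ℝ, S < t → ∀ᶠ i in l, g (u i) ≤ t) : g p ≤ S :=
  EReal.le_of_forall_lt_iff_le.1 fun t ht =>
    (hg.isClosed_preimage t).mem_of_mapClusterPt hp (hS t ht)

end ClusterPoints

section AugmentedLagrangian

variable {X H : Type*} [NormedAddCommGroup H] [InnerProductSpace ℝ H]
  {f : X → H → EReal} {σ : H → EReal} {A : H → H}

/-- The change `s ⟪A z, A w⟫` of the linear term is absorbed by the growth `(a + 1) s b σ(z)` of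
the penalty, as `|⟪A z, A w⟫| ≤ σ(z) b`. -/
theorem lagr_le_lagr_dsg_step (hσ : ∀ z, 0 ≤ σ z) (hA : ∀ z, (‖A z‖ : EReal) ≤ σ z)
    {y w : H} {c s a b : ℝ} (hc : 0 ≤ c) (hs : 0 ≤ s) (ha : 0 ≤ a) (hw : ‖A w‖ ≤ b)
    (x : X) (z : H) :
    lagr f σ A y c x z ≤ lagr f σ A (y - s • A w) (c + (a + 1) * s * b) x z := by
  have hb : 0 ≤ b := (norm_nonneg _).trans hw
  have hd : 0 ≤ (a + 1) * s * b := by positivity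
  have hinner : |inner ℝ (A z) (A w)| ≤ ‖A z‖ * b :=
    (abs_real_inner_le_norm _ _).trans (mul_le_mul_of_nonneg_left hw (norm_nonneg _))
  rw [lagr, lagr, inner_sub_right, real_inner_smul_right, sub_eq_add_neg, sub_eq_add_neg,
    add_assoc, add_assoc]
  refine add_le_add_right ?_ _
  have hS0 := hσ z
  have hSA := hA z
  generalize σ z = S at hS0 hSA ⊢
  induction S using EReal.rec with
  | bot => exact absurd hS0 (by simp)
  | coe t =>
    have hu : |inner ℝ (A z) (A w)| ≤ t * b :=
      hinner.trans (mul_le_mul_of_nonneg_right (EReal.coe_le_coe_iff.1 hSA) hb)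
    have ht : 0 ≤ t := EReal.coe_nonneg.1 hS0
    norm_cast
    nlinarith [mul_le_mul_of_nonneg_left (neg_abs_le (inner ℝ (A z) (A w))) hs,
      mul_le_mul_of_nonneg_left hu hs, mul_nonneg (mul_nonneg (mul_nonneg ha hs) hb) ht]
  | top =>
    rcases (add_nonneg hc hd).eq_or_lt with h0 | hpos
    · have hc0 : c = 0 := by linarith
      have hsu : s * inner ℝ (A z) (A w) = 0 := by
        rcases mul_eq_zero.1 (show (a + 1) * s * b = 0 by linarith) with h | h
        · simp [(mul_eq_zero.1 h).resolve_left (by linarith)]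
        · simp [show inner ℝ (A z) (A w) = 0 by simpa [h] using hinner]
      rw [← h0, hc0, hsu, sub_zero]
    · rw [EReal.coe_mul_top_of_pos hpos, ← EReal.coe_neg (_ - _), EReal.coe_add_top]
      exact le_top

theorem dsg_c_nonneg {c st a b : ℕ → ℝ} (hc0 : 0 ≤ c 0) (hst : ∀ k, 0 ≤ st k)
    (ha : ∀ k, 0 ≤ a k) (hb : ∀ k, 0 ≤ b k) (hc : ∀ k, c (k + 1) = c k + (a k + 1) * st k * b k) :
    ∀ k, 0 ≤ c k
  | 0 => hc0
  | k + 1 => by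
    rw [hc k]
    exact add_nonneg (dsg_c_nonneg hc0 hst ha hb hc k)
      (mul_nonneg (mul_nonneg (by linarith [ha k]) (hst k)) (hb k))

theorem monotone_lagr_dsg (hσ : ∀ z, 0 ≤ σ z) (hA : ∀ z, (‖A z‖ : EReal) ≤ σ z)
    {y w : ℕ → H} {c st a b : ℕ → ℝ} (hc0 : 0 ≤ c 0) (hst : ∀ k, 0 ≤ st k) (ha : ∀ k, 0 ≤ a k)
    (hw : ∀ k, ‖A (w k)‖ ≤ b k) (hy : ∀ k, y (k + 1) = y k - st k • A (w k))
    (hc : ∀ k, c (k + 1) = c k + (a k + 1) * st k * b k) (x : X) (z : H) :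
    Monotone fun k => lagr f σ A (y k) (c k) x z :=
  have hc_nonneg := dsg_c_nonneg hc0 hst ha (fun k => (norm_nonneg _).trans (hw k)) hc
  monotone_nat_of_le_succ fun k => by
    rw [hy k, hc k]
    exact lagr_le_lagr_dsg_step hσ hA (hc_nonneg k) (hst k) (ha k) (hw k) x z

theorem lagr_zero_right (hσ0 : σ 0 = 0) (hA0 : A 0 = 0) (y : H) (c : ℝ) (x : X) :
    lagr f σ A y c x 0 = f x 0 := by
  simp [lagr, hσ0, hA0]

theorem dualq_le_MP {φ : X → EReal} (hdual : ∀ x, f x 0 = φ x) (hσ0 : σ 0 = 0) (hA0 : A 0 = 0)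
    (y : H) (c : ℝ) : dualq f σ A y c ≤ MP φ :=
  le_iInf fun x => (iInf₂_le x 0).trans_eq (by rw [lagr_zero_right hσ0 hA0, hdual])

theorem le_add_inner_of_lagr_le {y : H} {c : ℝ} {x : X} {z : H} {B : EReal} (hc : 0 ≤ c)
    (hσ : 0 ≤ σ z) (h : lagr f σ A y c x z ≤ B) : f x z ≤ B + (inner ℝ (A z) y : ℝ) :=
  calc f x z = f x z - (inner ℝ (A z) y : ℝ) + (inner ℝ (A z) y : ℝ) :=
        EReal.sub_add_cancel.symm
    _ ≤ lagr f σ A y c x z + (inner ℝ (A z) y : ℝ) := by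
        gcongr
        exact le_add_of_nonneg_right (EReal.mul_nonneg (EReal.coe_nonneg.2 hc) hσ)
    _ ≤ B + (inner ℝ (A z) y : ℝ) := by gcongr

theorem eventually_le_of_forall_dualq_le {x : ℕ → X} {z : ℕ → H} {y : ℕ → H} {c r : ℕ → ℝ}
    (hσ : ∀ z, 0 ≤ σ z) (hc0 : 0 ≤ c 0) (hA0 : A 0 = 0)
    (hA1 : WUsc fun w => (inner ℝ (A w) (y 0) : ℝ))
    (hz : Tendsto (fun k => show WeakSpace ℝ H from z k) atTop (𝓝 (show WeakSpace ℝ H from 0)))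
    (hr : Tendsto r atTop (𝓝 0))
    (hlagr : ∀ k, lagr f σ A (y 0) (c 0) (x k) (z k) ≤ dualq f σ A (y k) (c k) + r k)
    {S : EReal} (hS : ∀ k, dualq f σ A (y k) (c k) ≤ S) :
    ∀ t : ℝ, S < t → ∀ᶠ k in atTop, f (x k) (z k) ≤ t := by
  intro t hSt
  obtain ⟨s, hSs, hst⟩ := EReal.lt_iff_exists_real_btwn.1 hSt
  have hδ : 0 < (t - s) / 2 := by linarith [EReal.coe_lt_coe_iff.1 hst]
  have hA1_zero : (inner ℝ (A 0) (y 0) : ℝ) < (t - s) / 2 := by rwa [hA0, inner_zero_left]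
  filter_upwards [hr.eventually_lt_const hδ, hz.eventually (hA1 _ _ hA1_zero)] with k hrk hk
  calc f (x k) (z k) ≤ dualq f σ A (y k) (c k) + r k + (inner ℝ (A (z k)) (y 0) : ℝ) :=
        le_add_inner_of_lagr_le hc0 (hσ _) (hlagr k)
    _ ≤ s + r k + (inner ℝ (A (z k)) (y 0) : ℝ) := by gcongr; exact (hS k).trans hSs.le
    _ = (s + r k + inner ℝ (A (z k)) (y 0) : ℝ) := by norm_cast
    _ ≤ t := EReal.coe_le_coe_iff.2 (by linarith [EReal.coe_lt_coe_iff.1 hst])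

end AugmentedLagrangian

section PrimalRecovery

variable {X H : Type*} [NormedAddCommGroup X] [NormedSpace ℝ X]
  [NormedAddCommGroup H] [InnerProductSpace ℝ H] {f : X → H → EReal} {x : ℕ → X} {z : ℕ → H}

theorem exists_wCompact_eventually_mem (hflev : WLevelCompact f)
    (hz : Tendsto (fun k => show WeakSpace ℝ H from z k) atTop (𝓝 (show WeakSpace ℝ H from 0)))
    {t : ℝ} (ht : ∀ᶠ k in atTop, f (x k) (z k) ≤ t) :
    ∃ B, WCompact B ∧ ∀ᶠ k in atTop, x k ∈ B := by
  obtain ⟨U, hU, hU0, B, hB, hUB⟩ := hflev 0 t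
  refine ⟨B, hB, ?_⟩
  filter_upwards [ht, hz.eventually (hU.mem_nhds hU0)] with k hfk hzk
  exact hUB _ hzk hfk

theorem exists_norm_le_of_eventually_le (hflev : WLevelCompact f)
    (hz : Tendsto (fun k => show WeakSpace ℝ H from z k) atTop (𝓝 (show WeakSpace ℝ H from 0)))
    {t : ℝ} (ht : ∀ᶠ k in atTop, f (x k) (z k) ≤ t) : ∃ M : ℝ, ∀ k, ‖x k‖ ≤ M := by
  obtain ⟨B, hB, hxB⟩ := exists_wCompact_eventually_mem hflev hz ht
  obtain ⟨C, hC⟩ := isBounded_iff_forall_norm_le.1 hB.isBounded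
  obtain ⟨M, hM⟩ := (isBoundedUnder_of_eventually_le (hxB.mono fun k hk => hC _ hk)).bddAbove_range
  exact ⟨M, fun k => hM ⟨k, rfl⟩⟩

variable {φ : X → EReal}

theorem le_of_weak_mapClusterPt (hdual : ∀ x, f x 0 = φ x)
    (hflsc : WLsc2 fun p : X × H => f p.1 p.2)
    (hz : Tendsto (fun k => show WeakSpace ℝ H from z k) atTop (𝓝 (show WeakSpace ℝ H from 0)))
    {S : EReal} (hS : ∀ t : ℝ, S < t → ∀ᶠ k in atTop, f (x k) (z k) ≤ t) {xs : X}
    (hxs : MapClusterPt (show WeakSpace ℝ X from xs) atTop fun k => show WeakSpace ℝ X from x k) :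
    φ xs ≤ S := by
  rw [← hdual]
  exact LowerSemicontinuous.le_of_mapClusterPt hflsc (hxs.prodMk_of_tendsto hz) hS

theorem MP_le_of_eventually_le (hdual : ∀ x, f x 0 = φ x)
    (hflsc : WLsc2 fun p : X × H => f p.1 p.2) (hflev : WLevelCompact f)
    (hz : Tendsto (fun k => show WeakSpace ℝ H from z k) atTop (𝓝 (show WeakSpace ℝ H from 0)))
    {S : EReal} (hS : ∀ t : ℝ, S < t → ∀ᶠ k in atTop, f (x k) (z k) ≤ t) : MP φ ≤ S := by
  rcases eq_or_ne S ⊤ with rfl | hS_top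
  · exact le_top
  obtain ⟨t, hSt, -⟩ := EReal.lt_iff_exists_real_btwn.1 hS_top.lt_top
  obtain ⟨B, hB, hxB⟩ := exists_wCompact_eventually_mem hflev hz (hS t hSt)
  obtain ⟨xs, -, hxs⟩ := IsCompact.exists_mapClusterPt (u := fun k => show WeakSpace ℝ X from x k)
    hB (le_principal_iff.2 hxB)
  exact (iInf_le φ xs).trans (le_of_weak_mapClusterPt hdual hflsc hz hS hxs)

end PrimalRecovery

theorem dsg_weak_zk_convergence_implies_primal_convergence_general
    {X H : Type*} [NormedAddCommGroup X] [NormedSpace ℝ X]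
    [NormedAddCommGroup H] [InnerProductSpace ℝ H]
    (φ : X → EReal)
    (hφproper : (∀ x, φ x ≠ ⊥) ∧ (∃ x, φ x ≠ ⊤))
    (f : X → H → EReal)
    (hdual : ∀ x, f x 0 = φ x)
    (hflsc : WLsc2 fun p : X × H => f p.1 p.2)
    (hflev : WLevelCompact f)
    (σ : H → EReal)
    (hσpos : ∀ z, 0 ≤ σ z)
    (hσ0 : σ 0 = 0)
    (A : H → H)
    (hA0 : ∀ z, (‖A z‖ : EReal) ≤ σ z)
    (hA1 : ∀ y : H, WUsc fun z => (inner ℝ (A z) y : ℝ))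
    (hSD : MP φ = MD f σ A)
    (x : ℕ → X) (z y : ℕ → H) (c st a r σz : ℕ → ℝ)
    (hσz : ∀ k, (σz k : EReal) = σ (z k))
    (abar : ℝ) (ha : ∀ k, 0 < a k ∧ a k < abar)
    (hst : ∀ k, 0 < st k)
    (hrlim : Tendsto r atTop (𝓝 0))
    (hc0 : 0 ≤ c 0)
    (hxz : ∀ k, lagr f σ A (y k) (c k) (x k) (z k) ≤ dualq f σ A (y k) (c k) + (r k : EReal))
    (hy : ∀ k, y (k + 1) = y k - st k • A (z k))
    (hc : ∀ k, c (k + 1) = c k + (a k + 1) * st k * σz k)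
    (hzconv : WSeqConv z 0) :
    Tendsto (fun k => dualq f σ A (y k) (c k)) atTop (𝓝 (MD f σ A)) ∧
      (∃ M : ℝ, ∀ k, ‖x k‖ ≤ M) ∧
      ∀ (xb : X) (ψ : ℕ → ℕ), StrictMono ψ → WSeqConv (fun n => x (ψ n)) xb →
        ∀ x' : X, φ xb ≤ φ x' := by
  have hA00 : A 0 = 0 := norm_le_zero_iff.1 (EReal.coe_nonpos.1 ((hA0 0).trans_eq hσ0))
  have hAz : ∀ k, ‖A (z k)‖ ≤ σz k := fun k =>
    EReal.coe_le_coe_iff.1 ((hA0 (z k)).trans_eq (hσz k).symm)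
  have hlagr := monotone_lagr_dsg (f := f) hσpos hA0 hc0 (fun k => (hst k).le)
    (fun k => (ha k).1.le) hAz hy hc
  have hq_mono : Monotone fun k => dualq f σ A (y k) (c k) := fun i j hij =>
    iInf₂_mono fun x' z' => hlagr x' z' hij
  have hq_le : ∀ k, dualq f σ A (y k) (c k) ≤ MP φ := fun k => dualq_le_MP hdual hσ0 hA00 _ _
  have hz := hzconv.tendsto_weakSpace
  have hf_le : ∀ S : EReal, (∀ k, dualq f σ A (y k) (c k) ≤ S) →
      ∀ t : ℝ, S < t → ∀ᶠ k in atTop, f (x k) (z k) ≤ t := fun S =>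
    eventually_le_of_forall_dualq_le hσpos hc0 hA00 (hA1 (y 0)) hz hrlim
      fun k => (hlagr (x k) (z k) (Nat.zero_le k)).trans (hxz k)
  refine ⟨?_, ?_, ?_⟩
  · have hsup : ⨆ k, dualq f σ A (y k) (c k) = MD f σ A := hSD ▸ le_antisymm (iSup_le hq_le)
      (MP_le_of_eventually_le hdual hflsc hflev hz (hf_le _ (le_iSup _)))
    exact hsup ▸ tendsto_atTop_iSup hq_mono
  · obtain ⟨x₀, hx₀⟩ := hφproper.2
    obtain ⟨t, hMPt, -⟩ := EReal.lt_iff_exists_real_btwn.1 ((iInf_le φ x₀).trans_lt hx₀.lt_top)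
    exact exists_norm_le_of_eventually_le hflev hz (hf_le _ hq_le t hMPt)
  · intro xb ψ hψ hxb x'
    have hcluster := hxb.tendsto_weakSpace.mapClusterPt.of_comp hψ.tendsto_atTop
    exact (le_of_weak_mapClusterPt hdual hflsc hz (hf_le _ hq_le) hcluster).trans (iInf_le φ x')

/-- If the sequence `{z_k}` generated by DSG converges weakly to `0`,
then `q_k → q̄`, the primal sequence `{x_k}` is bounded, and every weak accumulation point
of `{x_k}` is a primal solution. -/
theorem dsg_weak_zk_convergence_implies_primal_convergence
    {X H : Type*} [NormedAddCommGroup X] [NormedSpace ℝ X] [CompleteSpace X]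
    [NormedAddCommGroup H] [InnerProductSpace ℝ H] [CompleteSpace H]
    (hrefl : IsReflexiveSpace X)
    (φ : X → EReal)
    (hφproper : (∀ x, φ x ≠ ⊥) ∧ (∃ x, φ x ≠ ⊤))
    (hφwlsc : WLsc φ)
    (hφlev : ∀ α : ℝ, WCompact {x : X | φ x ≤ (α : EReal)})
    (f : X → H → EReal)
    (hdual : ∀ x, f x 0 = φ x)
    (hfproper : (∀ x z, f x z ≠ ⊥) ∧ (∃ x z, f x z ≠ ⊤))
    (hflsc : WLsc2 fun p : X × H => f p.1 p.2)
    (hflev : WLevelCompact f)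
    (σ : H → EReal)
    (hσpos : ∀ z, 0 ≤ σ z)
    (hσ0 : σ 0 = 0)
    (hσargmin : ∀ z, σ z = 0 → z = 0)
    (hσwlsc : WLsc σ)
    (A : H → H)
    (hA0 : ∀ z, (‖A z‖ : EReal) ≤ σ z)
    (hA1 : ∀ y : H, WUsc fun z => (inner ℝ (A z) y : ℝ))
    (hSD : MP φ = MD f σ A)
    (x : ℕ → X) (z y : ℕ → H) (c st a r σz : ℕ → ℝ)
    (hσz : ∀ k, (σz k : EReal) = σ (z k))
    (abar : ℝ) (habar : 0 < abar) (ha : ∀ k, 0 < a k ∧ a k < abar)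
    (hst : ∀ k, 0 < st k)
    (hrpos : ∀ k, 0 ≤ r k) (hrlim : Tendsto r atTop (𝓝 0))
    (hc0 : 0 ≤ c 0) (hq0 : dualq f σ A (y 0) (c 0) ≠ ⊥)
    (hxz : ∀ k, lagr f σ A (y k) (c k) (x k) (z k) ≤ dualq f σ A (y k) (c k) + (r k : EReal))
    (hy : ∀ k, y (k + 1) = y k - st k • A (z k))
    (hc : ∀ k, c (k + 1) = c k + (a k + 1) * st k * σz k)
    (hzconv : WSeqConv z 0) :
    Tendsto (fun k => dualq f σ A (y k) (c k)) atTop (𝓝 (MD f σ A)) ∧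
      (∃ M : ℝ, ∀ k, ‖x k‖ ≤ M) ∧
      ∀ (xb : X) (ψ : ℕ → ℕ), StrictMono ψ → WSeqConv (fun n => x (ψ n)) xb →
        ∀ x' : X, φ xb ≤ φ x' :=
  dsg_weak_zk_convergence_implies_primal_convergence_general φ hφproper f hdual hflsc hflev σ hσpos
    hσ0 A hA0 hA1 hSD x z y c st a r σz hσz abar ha hst hrlim hc0 hxz hy hc hzconv
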